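/- Let d ≥ 1 be an integer and consider the polynomial with rational coefficients Q(t) := (4t/(2d−1)) · ∏_{j=1}^{2d−2} (2t + j − (2d−1)/2)/j, which equals R(t − (2d−1)/4) where R(k) := ((4k+2d−1)/(2d−1)) · ∏_{j=1}^{2d−2} (2k+j)/j is the multiplicity polynomial of the k-th Laplace eigenvalue on the real projective space ℝP^{2d}. Then Q has degree 2d − 1 and the coefficient of t^{2d−2} in Q is zero. -/
import Mathlib


open Polynomial

/-- Multiplicity polynomial of the `k`-th Laplace eigenvalue on the even real projective space
`ℝP^{2d}`: `R(k) = ((4k+2d-1)/(2d-1)) ∏_{j=1}^{2d-2} (2k+j)/j`. -/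
noncomputable def rpEvenR (d : ℕ) : Polynomial ℚ :=
  C ((2 * (d : ℚ) - 1)⁻¹) * (4 * X + C (2 * (d : ℚ) - 1)) *
    ∏ j ∈ Finset.Icc 1 (2 * d - 2), C ((j : ℚ)⁻¹) * (2 * X + C ((j : ℚ)))

/-- The shifted multiplicity polynomial
`Q(t) = (4t/(2d-1)) ∏_{j=1}^{2d-2} (2t + j - (2d-1)/2)/j` for `ℝP^{2d}`. -/
noncomputable def rpEvenQ (d : ℕ) : Polynomial ℚ :=
  C (4 * (2 * (d : ℚ) - 1)⁻¹) * X *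
    ∏ j ∈ Finset.Icc 1 (2 * d - 2),
      C ((j : ℚ)⁻¹) * (2 * X + C ((j : ℚ) - (2 * (d : ℚ) - 1) / 2))

lemma rpAux_gauss (n : ℕ) : ∑ j ∈ Finset.Icc 1 n, (j : ℚ) = n * (n + 1) / 2 := by
  induction n with
  | zero => simp
  | succ n ih =>
    rw [Finset.sum_Icc_succ_top (by omega), ih]
    push_cast
    ring

lemma rpAux_factor (j : ℕ) (a : ℚ) :
    (C ((j:ℚ)⁻¹) : ℚ[X]) * (2 * X + C a) = C (2*(j:ℚ)⁻¹) * (X + C (a/2)) := by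
  have h : (C a : ℚ[X]) = 2 * C (a/2) := by
    rw [show (2 : ℚ[X]) = C 2 from (map_ofNat _ 2).symm, ← C_mul]; ring_nf
  rw [h, C_mul, show (C (2:ℚ) : ℚ[X]) = 2 from map_ofNat _ 2]
  ring

/-- For `d ≥ 1`, the polynomial `Q(t) = (4t/(2d-1)) ∏_{j=1}^{2d-2} (2t + j - (2d-1)/2)/j`
equals `R(t - (2d-1)/4)` where `R` is the multiplicity polynomial of `ℝP^{2d}`; it has
degree `2d - 1` and its coefficient of `t^{2d-2}` is zero. -/
theorem rpEven_W_condition (d : ℕ) (hd : 1 ≤ d) :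
    rpEvenQ d = (rpEvenR d).comp (X - C ((2 * (d : ℚ) - 1) / 4)) ∧
    (rpEvenQ d).natDegree = 2 * d - 1 ∧
    (rpEvenQ d).coeff (2 * d - 2) = 0 := by
  have hd1 : (1:ℚ) ≤ (d:ℚ) := by exact_mod_cast hd
  have h2d : (2*(d:ℚ) - 1) ≠ 0 := ne_of_gt (by linarith)
  -- the key restructured form of Q
  have hfac : ∀ j ∈ Finset.Icc 1 (2*d-2),
      (C ((j:ℚ)⁻¹) : ℚ[X]) * (2 * X + C ((j : ℚ) - (2 * (d : ℚ) - 1) / 2)) =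
      C (2*(j:ℚ)⁻¹) * (X + C (((j : ℚ) - (2 * (d : ℚ) - 1) / 2)/2)) :=
    fun j _ => rpAux_factor j _
  have hQ : rpEvenQ d =
      C ((4 * (2 * (d : ℚ) - 1)⁻¹) * ∏ j ∈ Finset.Icc 1 (2*d-2), 2*(j:ℚ)⁻¹) *
      (X * ∏ j ∈ Finset.Icc 1 (2*d-2),
        (X + C (((j : ℚ) - (2 * (d : ℚ) - 1) / 2)/2))) := by
    rw [rpEvenQ, Finset.prod_congr rfl hfac, Finset.prod_mul_distrib]
    conv_rhs => rw [C_mul, map_prod]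
    ring
  have hc : ((4 * (2 * (d : ℚ) - 1)⁻¹) * ∏ j ∈ Finset.Icc 1 (2*d-2), 2*(j:ℚ)⁻¹) ≠ 0 := by
    refine mul_ne_zero (mul_ne_zero four_ne_zero (inv_ne_zero h2d))
      (Finset.prod_ne_zero_iff.mpr fun j hj => mul_ne_zero two_ne_zero (inv_ne_zero ?_))
    have : 1 ≤ j := (Finset.mem_Icc.mp hj).1
    exact_mod_cast Nat.cast_ne_zero.mpr (by omega)
  have hcard : (Finset.Icc 1 (2*d-2)).card = 2*d-2 := by rw [Nat.card_Icc]; omega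
  have hmon : ∀ j ∈ Finset.Icc 1 (2*d-2),
      (X + C (((j : ℚ) - (2 * (d : ℚ) - 1) / 2)/2)).Monic :=
    fun j _ => monic_X_add_C _
  have hPdeg : (∏ j ∈ Finset.Icc 1 (2*d-2),
      (X + C (((j : ℚ) - (2 * (d : ℚ) - 1) / 2)/2))).natDegree = 2*d-2 := by
    rw [natDegree_prod_of_monic _ _ hmon]
    simp [hcard]
  have hPne : (∏ j ∈ Finset.Icc 1 (2*d-2),
      (X + C (((j : ℚ) - (2 * (d : ℚ) - 1) / 2)/2))) ≠ 0 :=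
    (monic_prod_of_monic _ _ hmon).ne_zero
  refine ⟨?_, ?_, ?_⟩
  · -- Q = R.comp (X - C ((2d-1)/4))
    rw [rpEvenQ, rpEvenR]
    simp only [show (4:ℚ[X]) = C 4 from (map_ofNat _ 4).symm,
      show (2:ℚ[X]) = C 2 from (map_ofNat _ 2).symm]
    simp only [mul_comp, add_comp, Polynomial.prod_comp, C_comp, X_comp, sub_comp]
    have e1 : (C (4:ℚ) : ℚ[X]) * (X - C ((2*(d:ℚ)-1)/4)) + C (2*(d:ℚ)-1) = C 4 * X := by
      have h4 : (C (4:ℚ) : ℚ[X]) * C ((2*(d:ℚ)-1)/4) = C (2*(d:ℚ)-1) := by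
        rw [← C_mul]; ring_nf
      rw [mul_sub, h4]; ring
    have e2 : ∀ j ∈ Finset.Icc 1 (2*d-2),
        (C ((j:ℚ)⁻¹) : ℚ[X]) * (C (2:ℚ) * (X - C ((2*(d:ℚ)-1)/4)) + C (j:ℚ)) =
        C ((j:ℚ)⁻¹) * (C (2:ℚ) * X + C ((j:ℚ) - (2*(d:ℚ)-1)/2)) := by
      intro j _
      have h2' : (C (2:ℚ) : ℚ[X]) * C ((2*(d:ℚ)-1)/4) = C ((2*(d:ℚ)-1)/2) := by
        rw [← C_mul]; ring_nf
      rw [mul_sub, h2', C_sub]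
      ring
    rw [e1, Finset.prod_congr rfl e2, show (C (4 * (2 * (d : ℚ) - 1)⁻¹) : ℚ[X]) =
      C 4 * C ((2 * (d : ℚ) - 1)⁻¹) from by rw [← C_mul]]
    ring
  · -- degree
    rw [hQ, natDegree_C_mul hc, natDegree_mul X_ne_zero hPne, natDegree_X, hPdeg]
    omega
  · -- vanishing coefficient
    rw [hQ, coeff_C_mul]
    by_cases hd2 : d = 1
    · subst hd2; simp
    · have h2le : 2 ≤ d := by omega
      obtain ⟨P, hPdef⟩ : ∃ P, (∏ j ∈ Finset.Icc 1 (2*d-2),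
          (X + C (((j : ℚ) - (2 * (d : ℚ) - 1) / 2)/2))) = P := ⟨_, rfl⟩
      have hPco : P.coeff (2*d-3) = ∑ j ∈ Finset.Icc 1 (2*d-2),
          (((j:ℚ) - (2*(d:ℚ)-1)/2)/2) := by
        rw [← hPdef, Finset.prod_X_add_C_coeff _ _ (by rw [hcard]; omega), hcard,
          show 2*d-2 - (2*d-3) = 1 from by omega, Finset.powersetCard_one, Finset.sum_map]
        simp only [Function.Embedding.coeFn_mk, Finset.prod_singleton]
      have hsum : ∑ j ∈ Finset.Icc 1 (2*d-2),
          (((j:ℚ) - (2*(d:ℚ)-1)/2)/2) = 0 := by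
        have step : ∀ j ∈ Finset.Icc 1 (2*d-2),
            (((j:ℚ) - (2*(d:ℚ)-1)/2)/2) = (j:ℚ)/2 - (2*(d:ℚ)-1)/4 := fun j _ => by ring
        rw [Finset.sum_congr rfl step, Finset.sum_sub_distrib, ← Finset.sum_div,
          rpAux_gauss, Finset.sum_const, hcard, nsmul_eq_mul]
        have hncast : ((2*d-2 : ℕ) : ℚ) = 2*(d:ℚ)-2 := by
          rw [Nat.cast_sub (by omega)]; push_cast; ring
        rw [hncast]
        ring
      rw [hPdef, show 2*d-2 = (2*d-3)+1 from by omega, coeff_X_mul, hPco, hsum, mul_zero]
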